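/- In the main-theorem setting, for every Type II strategy ρ ∈ 𝕋^{ii}: sup_{τ∈𝒯} E[U(ρ(τ),τ)] ≥ E[U(ρ(τ*(ρ)), τ*(ρ))] ≥ V, where τ*(ρ) := τ_d 1_{τ_d≤ρ(τ_d)} + τ_u(ρ(τ_d)) 1_{τ_d>ρ(τ_d)}. Consequently inf_{ρ∈𝕋^{ii}} sup_{τ∈𝒯} E[U(ρ(τ),τ)] ≥ V. -/

import Mathlib

/-!
Fix a Type II strategy `ρ`, put `σ := ρ(τ_d)` and let `τ*` be as in the statement. On `{τ_d ≤ σ}` we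
have `τ* = τ_d`, and non-anticipativity forces `ρ(τ*) ≥ τ_d`, so `ρ(τ*)` is admissible in the
essential infimum defining `V¹_{τ_d}`: `V¹_{τ_d} ≤ E[U(ρ(τ*), τ*) | ℱ_{τ_d}]`. On `{σ < τ_d}` we
have `τ* = τ_u(σ) > σ`, so non-anticipativity gives `ρ(τ*) = σ`, and since `V¹ < V²` before `τ_d`,
`V²_σ = E[U(σ, τ_u(σ)) | ℱ_σ]`. Integrating over the level sets of `τ_d` and `σ` gives
`E[U(ρ(τ*), τ*)] ≥ E[V¹_{τ_d} 1_{τ_d ≤ σ} + V²_σ 1_{σ < τ_d}] ≥ V`, the last step by optimality of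
`τ_d`.

The value `V¹_t` is only known as an essential infimum; it is integrable because a bounded family
has a measurable essential infimum, the pointwise infimum along a sequence of members whose infimum
has minimal integral.
-/

open MeasureTheory Filter

section BoundedIntegral

variable {Ω : Type*} {m : MeasurableSpace Ω} {μ : Measure Ω}

lemma bddBelow_range_integral [IsFiniteMeasure μ] {ι : Type*} {F : ι → Ω → ℝ} {C : ℝ}
    (hF : ∀ i, ∀ᵐ ω ∂μ, |F i ω| ≤ C) : BddBelow (Set.range fun i => ∫ ω, F i ω ∂μ) := by
  refine ⟨-(C * μ.real Set.univ), ?_⟩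
  rintro _ ⟨i, rfl⟩
  exact neg_le_of_abs_le (norm_integral_le_of_norm_le_const (f := F i) (hF i))

lemma bddAbove_range_integral [IsFiniteMeasure μ] {ι : Type*} {F : ι → Ω → ℝ} {C : ℝ}
    (hF : ∀ i, ∀ᵐ ω ∂μ, |F i ω| ≤ C) : BddAbove (Set.range fun i => ∫ ω, F i ω ∂μ) := by
  refine ⟨C * μ.real Set.univ, ?_⟩
  rintro _ ⟨i, rfl⟩
  exact le_of_abs_le (norm_integral_le_of_norm_le_const (f := F i) (hF i))

end BoundedIntegral

section EssInf

variable {Ω ι : Type*} {m : MeasurableSpace Ω} {μ : Measure Ω}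

def IsEssInf (μ : Measure Ω) (g : ι → Ω → ℝ) (V : Ω → ℝ) : Prop :=
  (∀ i, V ≤ᵐ[μ] g i) ∧ ∀ Z : Ω → ℝ, (∀ i, Z ≤ᵐ[μ] g i) → Z ≤ᵐ[μ] V

variable {g : ι → Ω → ℝ} {C : ℝ}

lemma IsEssInf.ae_eq {V W : Ω → ℝ} (hV : IsEssInf μ g V) (hW : IsEssInf μ g W) : V =ᵐ[μ] W :=
  (hW.2 V hV.1).antisymm (hV.2 W hW.1)

lemma IsEssInf.ae_abs_le [Nonempty ι] {V : Ω → ℝ} (hV : IsEssInf μ g V)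
    (hg : ∀ i, ∀ᵐ ω ∂μ, |g i ω| ≤ C) : ∀ᵐ ω ∂μ, |V ω| ≤ C := by
  obtain ⟨i⟩ := ‹Nonempty ι›
  have hlow : (fun _ => -C) ≤ᵐ[μ] V := hV.2 _ fun j => (hg j).mono fun ω h => (abs_le.1 h).1
  filter_upwards [hV.1 i, hlow, hg i] with ω hup hlow hgi
  exact abs_le.2 ⟨hlow, hup.trans (abs_le.1 hgi).2⟩

lemma ae_forall_iInf_le (hg : ∀ i, ∀ᵐ ω ∂μ, |g i ω| ≤ C) (s : ℕ → ι) :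
    ∀ᵐ ω ∂μ, ∀ n, ⨅ k, g (s k) ω ≤ g (s n) ω := by
  filter_upwards [ae_all_iff.2 fun n => hg (s n)] with ω hω n
  exact ciInf_le ⟨-C, by rintro _ ⟨k, rfl⟩; exact (abs_le.1 (hω k)).1⟩ n

lemma ae_abs_iInf_le (hg : ∀ i, ∀ᵐ ω ∂μ, |g i ω| ≤ C) (s : ℕ → ι) :
    ∀ᵐ ω ∂μ, |⨅ n, g (s n) ω| ≤ C := by
  filter_upwards [ae_forall_iInf_le hg s, ae_all_iff.2 fun n => hg (s n)] with ω hinf hω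
  exact abs_le.2 ⟨le_ciInf fun n => (abs_le.1 (hω n)).1, (hinf 0).trans (abs_le.1 (hω 0)).2⟩

lemma ae_le_iInf {Z : Ω → ℝ} {s : ℕ → ι} (hZ : ∀ n, Z ≤ᵐ[μ] g (s n)) :
    Z ≤ᵐ[μ] fun ω => ⨅ n, g (s n) ω := by
  filter_upwards [ae_all_iff.2 hZ] with ω hω using le_ciInf hω

variable [IsFiniteMeasure μ]

lemma integrable_iInf (hgm : ∀ i, Measurable (g i)) (hg : ∀ i, ∀ᵐ ω ∂μ, |g i ω| ≤ C)
    (s : ℕ → ι) : Integrable (fun ω => ⨅ n, g (s n) ω) μ :=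
  .of_bound (Measurable.iInf fun n => hgm (s n)).aestronglyMeasurable C (ae_abs_iInf_le hg s)

lemma exists_seq_integral_iInf_le [Nonempty ι] (hgm : ∀ i, Measurable (g i))
    (hg : ∀ i, ∀ᵐ ω ∂μ, |g i ω| ≤ C) :
    ∃ s : ℕ → ι, ∀ s' : ℕ → ι, ∫ ω, ⨅ n, g (s n) ω ∂μ ≤ ∫ ω, ⨅ n, g (s' n) ω ∂μ := by
  set F : (ℕ → ι) → ℝ := fun s => ∫ ω, ⨅ n, g (s n) ω ∂μ
  have hF : BddBelow (Set.range F) := bddBelow_range_integral (ae_abs_iInf_le hg)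
  have happrox : ∀ k : ℕ, ∃ s, F s < (⨅ s', F s') + 1 / (k + 1) := fun k =>
    exists_lt_of_ciInf_lt (lt_add_of_pos_right _ Nat.one_div_pos_of_nat)
  choose s hs using happrox
  -- splice the `1 / (k + 1)`-optimal sequences into one
  refine ⟨fun n => s n.unpair.1 n.unpair.2, fun s' => ?_⟩
  have hle : ∀ k, F (fun n => s n.unpair.1 n.unpair.2) ≤ F (s k) := fun k => by
    refine integral_mono_ae (integrable_iInf hgm hg _) (integrable_iInf hgm hg _) ?_
    filter_upwards [ae_forall_iInf_le hg fun n => s n.unpair.1 n.unpair.2] with ω hω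
    exact le_ciInf fun n => by simpa using hω (Nat.pair k n)
  refine (le_of_forall_pos_lt_add fun ε hε => ?_).trans (ciInf_le hF s')
  obtain ⟨k, hk⟩ := exists_nat_one_div_lt hε
  linarith [hle k, hs k]

theorem exists_measurable_isEssInf [Nonempty ι] (hgm : ∀ i, Measurable (g i))
    (hg : ∀ i, ∀ᵐ ω ∂μ, |g i ω| ≤ C) : ∃ W : Ω → ℝ, Measurable W ∧ IsEssInf μ g W := by
  obtain ⟨s, hs⟩ := exists_seq_integral_iInf_le hgm hg
  refine ⟨fun ω => ⨅ n, g (s n) ω, Measurable.iInf fun n => hgm (s n),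
    fun i => ?_, fun Z hZ => ae_le_iInf fun n => hZ (s n)⟩
  -- prepending `i` to `s` cannot lower the integral, so it does not lower the infimum either
  set s' : ℕ → ι := fun n => if n = 0 then i else s (n - 1)
  have hinf := ae_forall_iInf_le hg s'
  have hle : (fun ω => ⨅ n, g (s' n) ω) ≤ᵐ[μ] fun ω => ⨅ n, g (s n) ω := by
    filter_upwards [hinf] with ω hω
    exact le_ciInf fun n => by simpa [s'] using hω (n + 1)
  have hint' := integrable_iInf hgm hg s'
  have hint := integrable_iInf hgm hg s
  have heq : (fun ω => ⨅ n, g (s' n) ω) =ᵐ[μ] fun ω => ⨅ n, g (s n) ω :=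
    (integral_eq_iff_of_ae_le hint' hint hle).1 ((integral_mono_ae hint' hint hle).antisymm (hs s'))
  filter_upwards [heq, hinf] with ω hω hi
  simpa [← hω, s'] using hi 0

lemma IsEssInf.integrable [Nonempty ι] {V : Ω → ℝ} (hV : IsEssInf μ g V)
    (hgm : ∀ i, Measurable (g i)) (hg : ∀ i, ∀ᵐ ω ∂μ, |g i ω| ≤ C) : Integrable V μ := by
  obtain ⟨W, hWm, hW⟩ := exists_measurable_isEssInf hgm hg
  exact .of_bound (hWm.aestronglyMeasurable.congr (hV.ae_eq hW).symm) C (hV.ae_abs_le hg)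

end EssInf

namespace MeasureTheory.IsStoppingTime

variable {Ω : Type*} {m : MeasurableSpace Ω} {ℱ : Filtration ℕ m} {τ : Ω → ℕ}

lemma nat_iff :
    IsStoppingTime ℱ (fun ω => (τ ω : WithTop ℕ)) ↔ ∀ n : ℕ, MeasurableSet[ℱ n] {ω | τ ω ≤ n} := by
  simp [IsStoppingTime]

lemma measurableSet_nat_le (hτ : IsStoppingTime ℱ (fun ω => (τ ω : WithTop ℕ))) (n : ℕ) :
    MeasurableSet[ℱ n] {ω | τ ω ≤ n} :=
  nat_iff.1 hτ n

lemma measurableSet_nat_eq (hτ : IsStoppingTime ℱ (fun ω => (τ ω : WithTop ℕ))) (n : ℕ) :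
    MeasurableSet[ℱ n] {ω | τ ω = n} := by
  simpa using hτ.measurableSet_eq n

lemma measurableSet_nat_lt (hτ : IsStoppingTime ℱ (fun ω => (τ ω : WithTop ℕ))) (n : ℕ) :
    MeasurableSet[ℱ n] {ω | τ ω < n} := by
  simpa using hτ.measurableSet_lt n

lemma measurable_nat (hτ : IsStoppingTime ℱ (fun ω => (τ ω : WithTop ℕ))) : Measurable τ :=
  measurable_to_countable' fun n => ℱ.le n _ (hτ.measurableSet_nat_eq n)

lemma max_const_nat (hτ : IsStoppingTime ℱ (fun ω => (τ ω : WithTop ℕ))) (n : ℕ) :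
    IsStoppingTime ℱ (fun ω => ((max (τ ω) n : ℕ) : WithTop ℕ)) := by
  refine nat_iff.2 fun k => ?_
  simp only [max_le_iff, Set.ofPred_and]
  exact (hτ.measurableSet_nat_le k).inter (.const _)

lemma ite_le_comp {σ : Ω → ℕ} {θ : ℕ → Ω → ℕ} {T : ℕ}
    (hτ : IsStoppingTime ℱ (fun ω => (τ ω : WithTop ℕ)))
    (hσ : IsStoppingTime ℱ (fun ω => (σ ω : WithTop ℕ))) (hσT : ∀ ω, σ ω ≤ T)
    (hθ : ∀ k ≤ T, IsStoppingTime ℱ (fun ω => (θ k ω : WithTop ℕ)))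
    (hθk : ∀ k ≤ T, ∀ ω, k ≤ θ k ω) :
    IsStoppingTime ℱ (fun ω => ((if τ ω ≤ σ ω then τ ω else θ (σ ω) ω : ℕ) : WithTop ℕ)) := by
  refine nat_iff.2 fun n => ?_
  have hset : {ω | (if τ ω ≤ σ ω then τ ω else θ (σ ω) ω) ≤ n} =
      (⋃ k ∈ Finset.range (n + 1), {ω | τ ω = k} ∩ {ω | σ ω < k}ᶜ) ∪
        ⋃ k ∈ Finset.range (min n T + 1), {ω | σ ω = k} ∩ {ω | τ ω ≤ k}ᶜ ∩ {ω | θ k ω ≤ n} := by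
    ext ω
    simp only [Set.mem_ofPred_eq, Set.mem_union, Set.mem_iUnion, Set.mem_inter_iff,
      Set.mem_compl_iff, Finset.mem_range, exists_prop, not_lt, not_le]
    split_ifs with h
    · constructor
      · exact fun hn => .inl ⟨τ ω, by omega, rfl, h⟩
      · rintro (⟨k, hk, rfl, -⟩ | ⟨k, -, ⟨rfl, hk⟩, -⟩) <;> omega
    · constructor
      · exact fun hn => .inr ⟨σ ω, by have := hθk _ (hσT ω) ω; have := hσT ω; omega,
          ⟨rfl, by omega⟩, hn⟩
      · rintro (⟨k, -, rfl, hk⟩ | ⟨k, -, ⟨rfl, -⟩, hn⟩)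
        · omega
        · exact hn
  rw [hset]
  refine .union (Finset.measurableSet_biUnion _ fun k hk => ?_)
    (Finset.measurableSet_biUnion _ fun k hk => ?_)
  · have hkn : k ≤ n := Nat.lt_succ_iff.1 (Finset.mem_range.1 hk)
    exact ℱ.mono hkn _ ((hτ.measurableSet_nat_eq k).inter (hσ.measurableSet_nat_lt k).compl)
  · have hk' := Nat.lt_succ_iff.1 (Finset.mem_range.1 hk)
    exact (ℱ.mono (hk'.trans (min_le_left _ _)) _
      ((hσ.measurableSet_nat_eq k).inter (hτ.measurableSet_nat_le k).compl)).inter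
      ((hθ k (hk'.trans (min_le_right _ _))).measurableSet_nat_le n)

end MeasureTheory.IsStoppingTime

section Integrable

variable {Ω E : Type*} {m : MeasurableSpace Ω} {μ : Measure Ω} [NormedAddCommGroup E]
  {η ζ : Ω → ℕ} {T : ℕ}

lemma integrable_comp_nat {X : ℕ → Ω → E} (hX : ∀ t ≤ T, Integrable (X t) μ) (hη : Measurable η)
    (hηT : ∀ ω, η ω ≤ T) : Integrable (fun ω => X (η ω) ω) μ := by
  classical
  have hsum : (fun ω => X (η ω) ω) =
      fun ω => ∑ t ∈ Finset.range (T + 1), {ω | η ω = t}.indicator (X t) ω := by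
    funext ω
    simp [Set.indicator_apply, Nat.lt_succ_iff.2 (hηT ω)]
  rw [hsum]
  exact integrable_finsetSum _ fun t ht =>
    (hX t (Nat.lt_succ_iff.1 (Finset.mem_range.1 ht))).indicator (hη (measurableSet_singleton t))

lemma integrable_comp₂_nat {X : ℕ → ℕ → Ω → E} (hX : ∀ s ≤ T, ∀ t ≤ T, Integrable (X s t) μ)
    (hη : Measurable η) (hζ : Measurable ζ) (hηT : ∀ ω, η ω ≤ T) (hζT : ∀ ω, ζ ω ≤ T) :
    Integrable (fun ω => X (η ω) (ζ ω) ω) μ :=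
  integrable_comp_nat (X := fun s ω => X s (ζ ω) ω)
    (fun s hs => integrable_comp_nat (hX s hs) hζ hζT) hη hηT

end Integrable

section SetIntegral

variable {Ω : Type*} {m : MeasurableSpace Ω} {μ : Measure Ω}

lemma setIntegral_eq_sum_nat {E : Type*} [NormedAddCommGroup E] [NormedSpace ℝ E] {f : Ω → E}
    {s : Set Ω} {η : Ω → ℕ} {T : ℕ} (hs : MeasurableSet s) (hη : Measurable η)
    (hηT : ∀ ω, η ω ≤ T) (hf : IntegrableOn f s μ) :
    ∫ ω in s, f ω ∂μ = ∑ t ∈ Finset.range (T + 1), ∫ ω in s ∩ {ω | η ω = t}, f ω ∂μ := by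
  have hs_eq : s = ⋃ t ∈ Finset.range (T + 1), s ∩ {ω | η ω = t} := by
    ext ω
    simp [hηT]
  conv_lhs => rw [hs_eq]
  exact integral_biUnion_finset _ (fun t _ => hs.inter (hη (measurableSet_singleton t)))
    (fun i _ j _ hij => Set.disjoint_left.2 fun ω hi hj => hij (hi.2.symm.trans hj.2))
    fun t _ => hf.mono_set Set.inter_subset_left

end SetIntegral

lemma setIntegral_le_of_ae_le_condExp {Ω : Type*} {m m₀ : MeasurableSpace Ω} {μ : Measure Ω}
    (hm : m ≤ m₀) [SigmaFinite (μ.trim hm)] {s : Set Ω} {φ f : Ω → ℝ} (hs : MeasurableSet[m] s)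
    (hφ : IntegrableOn φ s μ) (hf : Integrable f μ) (hle : ∀ᵐ ω ∂μ, ω ∈ s → φ ω ≤ μ[f | m] ω) :
    ∫ ω in s, φ ω ∂μ ≤ ∫ ω in s, f ω ∂μ := by
  rw [← setIntegral_condExp hm hf hs]
  exact setIntegral_mono_on_ae hφ integrable_condExp.integrableOn (hm s hs) hle

section DynkinGame

variable {Ω : Type*} {m : MeasurableSpace Ω} {μ : Measure Ω}
  {ℱ : Filtration ℕ m} {T : ℕ} {U : ℕ → ℕ → Ω → ℝ} {C : ℝ} {X Y : ℕ → Ω → ℝ} {τ σ : Ω → ℕ}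

def dynkinPayoff (X Y : ℕ → Ω → ℝ) (τ σ : Ω → ℕ) (ω : Ω) : ℝ :=
  if τ ω ≤ σ ω then X (τ ω) ω else Y (σ ω) ω

lemma integrable_dynkinPayoff (hX : ∀ t ≤ T, Integrable (X t) μ)
    (hY : ∀ t ≤ T, Integrable (Y t) μ) (hτ : Measurable τ) (hσ : Measurable σ)
    (hτT : ∀ ω, τ ω ≤ T) (hσT : ∀ ω, σ ω ≤ T) : Integrable (dynkinPayoff X Y τ σ) μ :=
  integrable_comp₂_nat (X := fun s r ω => if s ≤ r then X s ω else Y r ω)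
    (fun s hs r hr => by by_cases h : s ≤ r <;> simp [h, hX s hs, hY r hr]) hτ hσ hτT hσT

lemma ae_abs_dynkinPayoff_le (hX : ∀ t ≤ T, ∀ᵐ ω ∂μ, |X t ω| ≤ C)
    (hY : ∀ t ≤ T, ∀ᵐ ω ∂μ, |Y t ω| ≤ C) (hτT : ∀ ω, τ ω ≤ T) (hσT : ∀ ω, σ ω ≤ T) :
    ∀ᵐ ω ∂μ, |dynkinPayoff X Y τ σ ω| ≤ C := by
  filter_upwards [ae_all_iff.2 fun t => eventually_imp_distrib_left.2 (hX t),
    ae_all_iff.2 fun t => eventually_imp_distrib_left.2 (hY t)] with ω hXω hYω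
  unfold dynkinPayoff
  split_ifs
  exacts [hXω _ (hτT ω), hYω _ (hσT ω)]

lemma integrable_comp_of_abs_le [IsFiniteMeasure μ]
    (hUmeas : ∀ s t, StronglyMeasurable[ℱ (max s t)] (U s t)) (hU : ∀ s t ω, |U s t ω| ≤ C)
    (hτ : Measurable τ) (hσ : Measurable σ)
    (hτT : ∀ ω, τ ω ≤ T) (hσT : ∀ ω, σ ω ≤ T) : Integrable (fun ω => U (τ ω) (σ ω) ω) μ :=
  integrable_comp₂_nat
    (fun s _ t _ => .of_bound ((hUmeas s t).mono (ℱ.le _)).aestronglyMeasurable C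
      (ae_of_all _ (hU s t))) hτ hσ hτT hσT

lemma setIntegral_stopped_le_of_le_condExp [IsFiniteMeasure μ] {π : Ω → ℕ}
    (hUmeas : ∀ s t, StronglyMeasurable[ℱ (max s t)] (U s t)) (hU : ∀ s t ω, |U s t ω| ≤ C)
    (hX : ∀ t ≤ T, Integrable (X t) μ)
    (hXle : ∀ t ≤ T, ∀ ρ : Ω → ℕ, IsStoppingTime ℱ (fun ω => (ρ ω : WithTop ℕ)) →
      (∀ ω, t ≤ ρ ω ∧ ρ ω ≤ T) → X t ≤ᵐ[μ] μ[fun ω => U (ρ ω) t ω | ℱ t])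
    (hτ : IsStoppingTime ℱ (fun ω => (τ ω : WithTop ℕ)))
    (hσ : IsStoppingTime ℱ (fun ω => (σ ω : WithTop ℕ)))
    (hπ : IsStoppingTime ℱ (fun ω => (π ω : WithTop ℕ))) (hτT : ∀ ω, τ ω ≤ T)
    (hπT : ∀ ω, π ω ≤ T) (hπτ : ∀ ω, τ ω ≤ σ ω → τ ω ≤ π ω) :
    ∫ ω in {ω | τ ω ≤ σ ω}, X (τ ω) ω ∂μ ≤ ∫ ω in {ω | τ ω ≤ σ ω}, U (π ω) (τ ω) ω ∂μ := by
  have hA : MeasurableSet {ω | τ ω ≤ σ ω} := measurableSet_le hτ.measurable_nat hσ.measurable_nat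
  rw [setIntegral_eq_sum_nat hA hτ.measurable_nat hτT
      (integrable_comp_nat hX hτ.measurable_nat hτT).integrableOn,
    setIntegral_eq_sum_nat hA hτ.measurable_nat hτT
      (integrable_comp_of_abs_le hUmeas hU hπ.measurable_nat hτ.measurable_nat hπT
        hτT).integrableOn]
  refine Finset.sum_le_sum fun t ht => ?_
  have htT : t ≤ T := Nat.lt_succ_iff.1 (Finset.mem_range.1 ht)
  have hAt : MeasurableSet[ℱ t] ({ω | τ ω ≤ σ ω} ∩ {ω | τ ω = t}) := by
    have hAt_eq : {ω | τ ω ≤ σ ω} ∩ {ω | τ ω = t} = {ω | τ ω = t} ∩ {ω | σ ω < t}ᶜ := by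
      ext ω
      simp only [Set.mem_inter_iff, Set.mem_ofPred_eq, Set.mem_compl_iff, not_lt]
      constructor <;> rintro ⟨h1, h2⟩ <;> omega
    rw [hAt_eq]
    exact (hτ.measurableSet_nat_eq t).inter (hσ.measurableSet_nat_lt t).compl
  -- `max π t` is admissible for `X t` and agrees with `π` on this piece
  have hρ := hπ.max_const_nat t
  have hρb : ∀ ω, t ≤ max (π ω) t ∧ max (π ω) t ≤ T := fun ω =>
    ⟨le_max_right _ _, max_le (hπT ω) htT⟩
  calc ∫ ω in {ω | τ ω ≤ σ ω} ∩ {ω | τ ω = t}, X (τ ω) ω ∂μ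
      = ∫ ω in {ω | τ ω ≤ σ ω} ∩ {ω | τ ω = t}, X t ω ∂μ :=
        setIntegral_congr_fun (ℱ.le t _ hAt) fun ω hω => by rw [hω.2]
    _ ≤ ∫ ω in {ω | τ ω ≤ σ ω} ∩ {ω | τ ω = t}, U (max (π ω) t) t ω ∂μ :=
        setIntegral_le_of_ae_le_condExp (ℱ.le t) hAt (hX t htT).integrableOn
          (integrable_comp_of_abs_le hUmeas hU hρ.measurable_nat measurable_const
            (fun ω => (hρb ω).2) fun _ => htT)
          ((hXle t htT _ hρ hρb).mono fun ω h _ => h)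
    _ = ∫ ω in {ω | τ ω ≤ σ ω} ∩ {ω | τ ω = t}, U (π ω) (τ ω) ω ∂μ :=
        setIntegral_congr_fun (ℱ.le t _ hAt) fun ω ⟨h1, h2⟩ => by
          rw [max_eq_left (h2 ▸ hπτ ω h1), h2]

lemma setIntegral_stopped_eq_of_eq_condExp [IsFiniteMeasure μ] {θ : ℕ → Ω → ℕ}
    (hUmeas : ∀ s t, StronglyMeasurable[ℱ (max s t)] (U s t)) (hU : ∀ s t ω, |U s t ω| ≤ C)
    (hY : ∀ t ≤ T, Integrable (Y t) μ)
    (hYeq : ∀ t < T, ∀ᵐ ω ∂μ, t < τ ω → Y t ω = μ[fun ω => U t (θ t ω) ω | ℱ t] ω)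
    (hθ : ∀ t ≤ T, Measurable (θ t)) (hθT : ∀ t ≤ T, ∀ ω, θ t ω ≤ T)
    (hτ : IsStoppingTime ℱ (fun ω => (τ ω : WithTop ℕ)))
    (hσ : IsStoppingTime ℱ (fun ω => (σ ω : WithTop ℕ))) (hτT : ∀ ω, τ ω ≤ T)
    (hσT : ∀ ω, σ ω ≤ T) :
    ∫ ω in {ω | σ ω < τ ω}, Y (σ ω) ω ∂μ =
      ∫ ω in {ω | σ ω < τ ω}, U (σ ω) (θ (σ ω) ω) ω ∂μ := by
  have hA : MeasurableSet {ω | σ ω < τ ω} := measurableSet_lt hσ.measurable_nat hτ.measurable_nat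
  have hUθ : ∀ t ≤ T, Integrable (fun ω => U t (θ t ω) ω) μ := fun t ht =>
    integrable_comp_of_abs_le hUmeas hU measurable_const (hθ t ht) (fun _ => ht) (hθT t ht)
  rw [setIntegral_eq_sum_nat hA hσ.measurable_nat hσT
      (integrable_comp_nat hY hσ.measurable_nat hσT).integrableOn,
    setIntegral_eq_sum_nat hA hσ.measurable_nat hσT
      (integrable_comp_nat hUθ hσ.measurable_nat hσT).integrableOn]
  refine Finset.sum_congr rfl fun t ht => ?_
  have htT : t ≤ T := Nat.lt_succ_iff.1 (Finset.mem_range.1 ht)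
  have hAt : MeasurableSet[ℱ t] ({ω | σ ω < τ ω} ∩ {ω | σ ω = t}) := by
    have hAt_eq : {ω | σ ω < τ ω} ∩ {ω | σ ω = t} = {ω | σ ω = t} ∩ {ω | τ ω ≤ t}ᶜ := by
      ext ω
      simp only [Set.mem_inter_iff, Set.mem_ofPred_eq, Set.mem_compl_iff, not_le]
      constructor <;> rintro ⟨h1, h2⟩ <;> omega
    rw [hAt_eq]
    exact (hσ.measurableSet_nat_eq t).inter (hτ.measurableSet_nat_le t).compl
  have hYt : ∀ᵐ ω ∂μ, ω ∈ {ω | σ ω < τ ω} ∩ {ω | σ ω = t} →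
      Y (σ ω) ω = μ[fun ω => U t (θ t ω) ω | ℱ t] ω := by
    by_cases htT' : t < T
    · filter_upwards [hYeq t htT'] with ω hω ⟨(h1 : σ ω < τ ω), (h2 : σ ω = t)⟩
      rw [h2]
      exact hω (h2 ▸ h1)
    · refine ae_of_all _ fun ω ⟨(h1 : σ ω < τ ω), (h2 : σ ω = t)⟩ => absurd ?_ htT'
      have := hτT ω
      omega
  calc ∫ ω in {ω | σ ω < τ ω} ∩ {ω | σ ω = t}, Y (σ ω) ω ∂μ
      = ∫ ω in {ω | σ ω < τ ω} ∩ {ω | σ ω = t}, μ[fun ω => U t (θ t ω) ω | ℱ t] ω ∂μ :=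
        setIntegral_congr_ae (ℱ.le t _ hAt) hYt
    _ = ∫ ω in {ω | σ ω < τ ω} ∩ {ω | σ ω = t}, U t (θ t ω) ω ∂μ :=
        setIntegral_condExp (ℱ.le t) (hUθ t htT) hAt
    _ = ∫ ω in {ω | σ ω < τ ω} ∩ {ω | σ ω = t}, U (σ ω) (θ (σ ω) ω) ω ∂μ :=
        setIntegral_congr_fun (ℱ.le t _ hAt) fun ω ⟨_, h⟩ => by rw [h]

theorem integral_dynkinPayoff_le [IsFiniteMeasure μ] {π τs : Ω → ℕ} {θ : ℕ → Ω → ℕ}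
    (hUmeas : ∀ s t, StronglyMeasurable[ℱ (max s t)] (U s t)) (hU : ∀ s t ω, |U s t ω| ≤ C)
    (hX : ∀ t ≤ T, Integrable (X t) μ) (hY : ∀ t ≤ T, Integrable (Y t) μ)
    (hXle : ∀ t ≤ T, ∀ ρ : Ω → ℕ, IsStoppingTime ℱ (fun ω => (ρ ω : WithTop ℕ)) →
      (∀ ω, t ≤ ρ ω ∧ ρ ω ≤ T) → X t ≤ᵐ[μ] μ[fun ω => U (ρ ω) t ω | ℱ t])
    (hYeq : ∀ t < T, ∀ᵐ ω ∂μ, t < τ ω → Y t ω = μ[fun ω => U t (θ t ω) ω | ℱ t] ω)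
    (hθ : ∀ t ≤ T, Measurable (θ t)) (hθT : ∀ t ≤ T, ∀ ω, θ t ω ≤ T)
    (hτ : IsStoppingTime ℱ (fun ω => (τ ω : WithTop ℕ)))
    (hσ : IsStoppingTime ℱ (fun ω => (σ ω : WithTop ℕ)))
    (hπ : IsStoppingTime ℱ (fun ω => (π ω : WithTop ℕ))) (hτs : Measurable τs)
    (hτT : ∀ ω, τ ω ≤ T) (hσT : ∀ ω, σ ω ≤ T) (hπT : ∀ ω, π ω ≤ T) (hτsT : ∀ ω, τs ω ≤ T)
    (hτsτ : ∀ ω, τ ω ≤ σ ω → τs ω = τ ω) (hτsθ : ∀ ω, σ ω < τ ω → τs ω = θ (σ ω) ω)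
    (hπτ : ∀ ω, τ ω ≤ σ ω → τ ω ≤ π ω) (hπσ : ∀ ω, σ ω < τ ω → π ω = σ ω) :
    ∫ ω, dynkinPayoff X Y τ σ ω ∂μ ≤ ∫ ω, U (π ω) (τs ω) ω ∂μ := by
  have hA : MeasurableSet {ω | τ ω ≤ σ ω} := measurableSet_le hτ.measurable_nat hσ.measurable_nat
  have hAc : {ω | τ ω ≤ σ ω}ᶜ = {ω | σ ω < τ ω} := by
    ext ω
    simp
  rw [← integral_add_compl hA (integrable_dynkinPayoff hX hY hτ.measurable_nat hσ.measurable_nat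
      hτT hσT),
    ← integral_add_compl hA
      (integrable_comp_of_abs_le hUmeas hU hπ.measurable_nat hτs hπT hτsT), hAc]
  refine add_le_add ?_ (le_of_eq ?_)
  · calc ∫ ω in {ω | τ ω ≤ σ ω}, dynkinPayoff X Y τ σ ω ∂μ
        = ∫ ω in {ω | τ ω ≤ σ ω}, X (τ ω) ω ∂μ :=
          setIntegral_congr_fun hA fun ω h => if_pos h
      _ ≤ ∫ ω in {ω | τ ω ≤ σ ω}, U (π ω) (τ ω) ω ∂μ :=
          setIntegral_stopped_le_of_le_condExp hUmeas hU hX hXle hτ hσ hπ hτT hπT hπτ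
      _ = ∫ ω in {ω | τ ω ≤ σ ω}, U (π ω) (τs ω) ω ∂μ :=
          setIntegral_congr_fun hA fun ω h => by rw [hτsτ ω h]
  · calc ∫ ω in {ω | σ ω < τ ω}, dynkinPayoff X Y τ σ ω ∂μ
        = ∫ ω in {ω | σ ω < τ ω}, Y (σ ω) ω ∂μ :=
          setIntegral_congr_fun (hAc ▸ hA.compl) fun ω h => if_neg (not_le.2 h)
      _ = ∫ ω in {ω | σ ω < τ ω}, U (σ ω) (θ (σ ω) ω) ω ∂μ :=
          setIntegral_stopped_eq_of_eq_condExp hUmeas hU hY hYeq hθ hθT hτ hσ hτT hσT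
      _ = ∫ ω in {ω | σ ω < τ ω}, U (π ω) (τs ω) ω ∂μ :=
          setIntegral_congr_fun (hAc ▸ hA.compl) fun ω h => by rw [hπσ ω h, hτsθ ω h]

lemma integrable_and_abs_le_of_essInf_condExp [IsFiniteMeasure μ] {t : ℕ} (ht : t ≤ T) {V : Ω → ℝ}
    (hU : ∀ s t ω, |U s t ω| ≤ C)
    (hle : ∀ ρ : Ω → ℕ, IsStoppingTime ℱ (fun ω => (ρ ω : WithTop ℕ)) →
      (∀ ω, t ≤ ρ ω ∧ ρ ω ≤ T) → V ≤ᵐ[μ] μ[fun ω => U (ρ ω) t ω | ℱ t])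
    (hgreatest : ∀ Z : Ω → ℝ, (∀ ρ : Ω → ℕ, IsStoppingTime ℱ (fun ω => (ρ ω : WithTop ℕ)) →
      (∀ ω, t ≤ ρ ω ∧ ρ ω ≤ T) → Z ≤ᵐ[μ] μ[fun ω => U (ρ ω) t ω | ℱ t]) → Z ≤ᵐ[μ] V) :
    Integrable V μ ∧ ∀ᵐ ω ∂μ, |V ω| ≤ C := by
  let ι := {ρ : Ω → ℕ // IsStoppingTime ℱ (fun ω => (ρ ω : WithTop ℕ)) ∧ ∀ ω, t ≤ ρ ω ∧ ρ ω ≤ T}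
  have : Nonempty ι := ⟨⟨fun _ => T, isStoppingTime_const ℱ T, fun _ => ⟨ht, le_rfl⟩⟩⟩
  have hV : IsEssInf μ (fun ρ : ι => μ[fun ω => U (ρ.1 ω) t ω | ℱ t]) V :=
    ⟨fun ρ => hle ρ.1 ρ.2.1 ρ.2.2, fun Z hZ => hgreatest Z fun ρ h1 h2 => hZ ⟨ρ, h1, h2⟩⟩
  have hg : ∀ ρ : ι, ∀ᵐ ω ∂μ, |μ[fun ω => U (ρ.1 ω) t ω | ℱ t] ω| ≤ C := fun ρ =>
    ae_bdd_abs_condExp_of_ae_bdd_abs (ae_of_all _ fun ω => hU _ _ ω)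
  exact ⟨hV.integrable (fun ρ => (stronglyMeasurable_condExp.mono (ℱ.le t)).measurable) hg,
    hV.ae_abs_le hg⟩

lemma integrable_and_abs_le_of_eq_max [IsFiniteMeasure μ] {m' : MeasurableSpace Ω}
    {S V₁ V₂ f : Ω → ℝ} (hV₂ : ∀ ω, V₂ ω = max (S ω) (V₁ ω)) (hS : S =ᵐ[μ] μ[f | m'])
    (hf : ∀ ω, |f ω| ≤ C) (hV₁ : Integrable V₁ μ ∧ ∀ᵐ ω ∂μ, |V₁ ω| ≤ C) :
    Integrable V₂ μ ∧ ∀ᵐ ω ∂μ, |V₂ ω| ≤ C := by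
  have hSC : ∀ᵐ ω ∂μ, |S ω| ≤ C := by
    filter_upwards [hS, ae_bdd_abs_condExp_of_ae_bdd_abs (ae_of_all _ hf)] with ω h1 h2
    rwa [h1]
  rw [show V₂ = S ⊔ V₁ from funext hV₂]
  refine ⟨(integrable_condExp.congr hS.symm).sup hV₁.1, ?_⟩
  filter_upwards [hSC, hV₁.2] with ω h1 h2
  exact abs_max_le_max_abs_abs.trans (max_le h1 h2)

def boundedStoppingTimes (ℱ : Filtration ℕ m) (T : ℕ) : Set (Ω → ℕ) :=
  {σ | IsStoppingTime ℱ (fun ω => (σ ω : WithTop ℕ)) ∧ ∀ ω, σ ω ≤ T}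

def IsTypeIIStrategy (ℱ : Filtration ℕ m) (T : ℕ) (ρ : (Ω → ℕ) → Ω → ℕ) : Prop :=
  (∀ σ ∈ boundedStoppingTimes ℱ T, ρ σ ∈ boundedStoppingTimes ℱ T) ∧
    ∀ σ₁ ∈ boundedStoppingTimes ℱ T, ∀ σ₂ ∈ boundedStoppingTimes ℱ T, ∀ ω,
      (ρ σ₁ ω = ρ σ₂ ω ∧ ρ σ₁ ω < min (σ₁ ω) (σ₂ ω)) ∨ min (σ₁ ω) (σ₂ ω) ≤ min (ρ σ₁ ω) (ρ σ₂ ω)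

theorem le_integral_of_isTypeIIStrategy [IsFiniteMeasure μ] {V : ℝ} {τs : Ω → ℕ}
    {τu : ℕ → Ω → ℕ} {ρ : (Ω → ℕ) → Ω → ℕ}
    (hUmeas : ∀ s t, StronglyMeasurable[ℱ (max s t)] (U s t)) (hU : ∀ s t ω, |U s t ω| ≤ C)
    (hX : ∀ t ≤ T, Integrable (X t) μ ∧ ∀ᵐ ω ∂μ, |X t ω| ≤ C)
    (hY : ∀ t ≤ T, Integrable (Y t) μ ∧ ∀ᵐ ω ∂μ, |Y t ω| ≤ C)
    (hXle : ∀ t ≤ T, ∀ ρ : Ω → ℕ, IsStoppingTime ℱ (fun ω => (ρ ω : WithTop ℕ)) →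
      (∀ ω, t ≤ ρ ω ∧ ρ ω ≤ T) → X t ≤ᵐ[μ] μ[fun ω => U (ρ ω) t ω | ℱ t])
    (hYeq : ∀ t < T, ∀ᵐ ω ∂μ, t < τ ω → Y t ω = μ[fun ω => U t (τu t ω) ω | ℱ t] ω)
    (hτu : ∀ t ≤ T, τu t ∈ boundedStoppingTimes ℱ T) (hτuge : ∀ t < T, ∀ ω, t + 1 ≤ τu t ω)
    (hτuT : ∀ ω, τu T ω = T) (hτ : τ ∈ boundedStoppingTimes ℱ T)
    (hV : V = ⨅ σ : boundedStoppingTimes ℱ T, ∫ ω, dynkinPayoff X Y τ σ ω ∂μ)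
    (hρ : IsTypeIIStrategy ℱ T ρ)
    (hτs : ∀ ω, τs ω = if τ ω ≤ ρ τ ω then τ ω else τu (ρ τ ω) ω) :
    τs ∈ boundedStoppingTimes ℱ T ∧ V ≤ ∫ ω, U (ρ τs ω) (τs ω) ω ∂μ := by
  obtain ⟨hmap, hna⟩ := hρ
  have hσ := hmap τ hτ
  have hτu_ge : ∀ t ≤ T, ∀ ω, t ≤ τu t ω := fun t ht ω =>
    ht.lt_or_eq.elim (fun h => (hτuge t h ω).trans' t.le_succ) fun h => h ▸ (hτuT ω).ge
  have hτs𝒯 : τs ∈ boundedStoppingTimes ℱ T := by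
    refine ⟨funext hτs ▸ hτ.1.ite_le_comp hσ.1 hσ.2 (fun t ht => (hτu t ht).1) hτu_ge,
      fun ω => ?_⟩
    rw [hτs ω]
    split_ifs
    exacts [hτ.2 ω, (hτu _ (hσ.2 ω)).2 ω]
  have hπ := hmap τs hτs𝒯
  have hπτ : ∀ ω, τ ω ≤ ρ τ ω → τ ω ≤ ρ τs ω := fun ω h => by
    have hna := hna τ hτ τs hτs𝒯 ω
    rw [hτs ω, if_pos h] at hna
    omega
  have hπσ : ∀ ω, ρ τ ω < τ ω → ρ τs ω = ρ τ ω := fun ω h => by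
    have hna := hna τ hτ τs hτs𝒯 ω
    have := hτuge (ρ τ ω) (h.trans_le (hτ.2 ω)) ω
    rw [hτs ω, if_neg (not_le.2 h)] at hna
    omega
  refine ⟨hτs𝒯, ?_⟩
  calc V ≤ ∫ ω, dynkinPayoff X Y τ (ρ τ) ω ∂μ := by
        rw [hV]
        refine ciInf_le (bddBelow_range_integral (C := C) fun σ => ?_) (Subtype.mk (ρ τ) hσ)
        exact ae_abs_dynkinPayoff_le (fun t ht => (hX t ht).2) (fun t ht => (hY t ht).2) hτ.2
          σ.2.2
    _ ≤ ∫ ω, U (ρ τs ω) (τs ω) ω ∂μ :=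
        integral_dynkinPayoff_le hUmeas hU (fun t ht => (hX t ht).1) (fun t ht => (hY t ht).1)
          hXle hYeq (fun t ht => (hτu t ht).1.measurable_nat) (fun t ht => (hτu t ht).2) hτ.1 hσ.1
          hπ.1 hτs𝒯.1.measurable_nat hτ.2 hσ.2 hπ.2 hτs𝒯.2 (fun ω h => by rw [hτs ω, if_pos h])
          (fun ω h => by rw [hτs ω, if_neg (not_le.2 h)]) hπτ hπσ

end DynkinGame

theorem stmt_16_general {Ω : Type*} {m : MeasurableSpace Ω} {μ : Measure Ω} [IsProbabilityMeasure μ]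
    (ℱ : Filtration ℕ m) (T : ℕ)
    (U : ℕ → ℕ → Ω → ℝ)
    (hUmeas : ∀ s t, StronglyMeasurable[ℱ (max s t)] (U s t))
    (hUbdd : ∃ C, ∀ s t ω, |U s t ω| ≤ C)
    (𝒯 : Set (Ω → ℕ))
    (h𝒯 : 𝒯 = {σ | IsStoppingTime ℱ (fun ω => (σ ω : WithTop ℕ)) ∧ ∀ ω, σ ω ≤ T})
    (V1 S V2 : ℕ → Ω → ℝ)
    (hV1le : ∀ t ≤ T, ∀ ρ : Ω → ℕ, IsStoppingTime ℱ (fun ω => (ρ ω : WithTop ℕ)) → (∀ ω, t ≤ ρ ω ∧ ρ ω ≤ T) →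
      V1 t ≤ᵐ[μ] μ[fun ω => U (ρ ω) t ω | ℱ t])
    (hV1greatest : ∀ t ≤ T, ∀ Z : Ω → ℝ,
      (∀ ρ : Ω → ℕ, IsStoppingTime ℱ (fun ω => (ρ ω : WithTop ℕ)) → (∀ ω, t ≤ ρ ω ∧ ρ ω ≤ T) →
        Z ≤ᵐ[μ] μ[fun ω => U (ρ ω) t ω | ℱ t]) → Z ≤ᵐ[μ] V1 t)
    (hV2 : ∀ t < T, ∀ ω, V2 t ω = max (S t ω) (V1 t ω))
    (hV2T : V2 T = U T T)
    (TypeII : ((Ω → ℕ) → Ω → ℕ) → Prop)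
    (hTypeII : ∀ ρ, TypeII ρ ↔ ((∀ σ ∈ 𝒯, ρ σ ∈ 𝒯) ∧ ∀ σ₁ ∈ 𝒯, ∀ σ₂ ∈ 𝒯, ∀ ω,
      (ρ σ₁ ω = ρ σ₂ ω ∧ ρ σ₁ ω < min (σ₁ ω) (σ₂ ω)) ∨
        min (σ₁ ω) (σ₂ ω) ≤ min (ρ σ₁ ω) (ρ σ₂ ω)))
    -- the Dynkin game value V and its optimal τ_d
    (V : ℝ)
    (τd : Ω → ℕ) (hτd : τd ∈ 𝒯)
    (hτdopt : V = ⨅ ρ : 𝒯,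
      ∫ ω, (if τd ω ≤ ρ.1 ω then V1 (τd ω) ω else V2 (ρ.1 ω) ω) ∂μ)
    -- strictly before τ_d one has V¹ < V², so the esssup part attains V²
    (hbefore : ∀ᵐ ω ∂μ, ∀ s, s < τd ω → V1 s ω < V2 s ω)
    -- optimizers τ_u(t) of the esssup, with τ_u(t) ≥ t+1 for t < T and τ_u(T) = T
    (τu : ℕ → Ω → ℕ)
    (hτu : ∀ t ≤ T, IsStoppingTime ℱ (fun ω => (τu t ω : WithTop ℕ)) ∧ ∀ ω, τu t ω ≤ T)
    (hτuge : ∀ t, t < T → ∀ ω, t + 1 ≤ τu t ω)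
    (hτuT : ∀ ω, τu T ω = T)
    (hτuopt : ∀ t < T, S t =ᵐ[μ] μ[fun ω => U t (τu t ω) ω | ℱ t]) :
    (∀ ρ : (Ω → ℕ) → Ω → ℕ, TypeII ρ →
      ∀ τs : Ω → ℕ, (∀ ω, τs ω = if τd ω ≤ ρ τd ω then τd ω else τu (ρ τd ω) ω) →
        V ≤ ∫ ω, U (ρ τs ω) (τs ω) ω ∂μ ∧
        (∫ ω, U (ρ τs ω) (τs ω) ω ∂μ) ≤ ⨆ τ : 𝒯, ∫ ω, U (ρ τ.1 ω) (τ.1 ω) ω ∂μ) ∧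
    V ≤ ⨅ ρ : {ρ : (Ω → ℕ) → Ω → ℕ // TypeII ρ}, ⨆ τ : 𝒯,
      ∫ ω, U (ρ.1 τ.1 ω) (τ.1 ω) ω ∂μ := by
  obtain ⟨C, hC⟩ := hUbdd
  subst h𝒯
  have hV1int : ∀ t ≤ T, Integrable (V1 t) μ ∧ ∀ᵐ ω ∂μ, |V1 t ω| ≤ C := fun t ht =>
    integrable_and_abs_le_of_essInf_condExp ht hC (hV1le t ht) (hV1greatest t ht)
  have hV2int : ∀ t ≤ T, Integrable (V2 t) μ ∧ ∀ᵐ ω ∂μ, |V2 t ω| ≤ C := by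
    intro t ht
    rcases ht.lt_or_eq with ht | rfl
    · exact integrable_and_abs_le_of_eq_max (hV2 t ht) (hτuopt t ht) (fun ω => hC _ _ ω)
        (hV1int t ht.le)
    · rw [hV2T]
      exact ⟨.of_bound ((hUmeas t t).mono (ℱ.le _)).aestronglyMeasurable C (ae_of_all _ (hC t t)),
        ae_of_all _ (hC t t)⟩
  have hV2eq : ∀ t < T, ∀ᵐ ω ∂μ, t < τd ω → V2 t ω = μ[fun ω => U t (τu t ω) ω | ℱ t] ω := by
    intro t ht
    filter_upwards [hbefore, hτuopt t ht] with ω hlt hS htτ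
    have h := hlt t htτ
    rw [hV2 t ht ω] at h ⊢
    rw [← hS]
    exact max_eq_left ((lt_max_iff.1 h).resolve_right (lt_irrefl _)).le
  have key := fun ρ hρ τs hτs => le_integral_of_isTypeIIStrategy (ρ := ρ) (τs := τs) hUmeas hC
    hV1int hV2int hV1le hV2eq hτu hτuge hτuT hτd hτdopt ((hTypeII ρ).1 hρ) hτs
  have hbdd : ∀ ρ : (Ω → ℕ) → Ω → ℕ, BddAbove (Set.range fun τ : boundedStoppingTimes ℱ T =>
      ∫ ω, U (ρ τ.1 ω) (τ.1 ω) ω ∂μ) := fun ρ =>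
    bddAbove_range_integral fun τ => ae_of_all _ fun ω => hC _ _ ω
  refine ⟨fun ρ hρ τs hτs =>
    ⟨(key ρ hρ τs hτs).2, le_ciSup (hbdd ρ) ⟨τs, (key ρ hρ τs hτs).1⟩⟩, ?_⟩
  have : Nonempty {ρ // TypeII ρ} :=
    ⟨⟨id, (hTypeII id).2 ⟨fun σ h => h, fun _ _ _ _ _ => .inr le_rfl⟩⟩⟩
  exact le_ciInf fun ρ => (key ρ.1 ρ.2 _ fun _ => rfl).2.trans
    (le_ciSup (hbdd ρ.1) ⟨_, (key ρ.1 ρ.2 _ fun _ => rfl).1⟩)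

/-- For every Type II strategy `ρ`, with
`τ*(ρ) := τ_d 1_{τ_d≤ρ(τ_d)} + τ_u(ρ(τ_d)) 1_{τ_d>ρ(τ_d)}`:
`sup_{τ∈𝒯} E[U(ρ(τ),τ)] ≥ E[U(ρ(τ*(ρ)),τ*(ρ))] ≥ V`; consequently
`inf_{ρ∈𝕋ⁱⁱ} sup_{τ∈𝒯} E[U(ρ(τ),τ)] ≥ V`. -/
theorem stmt_16 {Ω : Type*} {m : MeasurableSpace Ω} {μ : Measure Ω} [IsProbabilityMeasure μ]
    (ℱ : Filtration ℕ m) (T : ℕ)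
    (U : ℕ → ℕ → Ω → ℝ)
    (hUmeas : ∀ s t, StronglyMeasurable[ℱ (max s t)] (U s t))
    (hUbdd : ∃ C, ∀ s t ω, |U s t ω| ≤ C)
    (𝒯 : Set (Ω → ℕ))
    (h𝒯 : 𝒯 = {σ | IsStoppingTime ℱ (fun ω => (σ ω : WithTop ℕ)) ∧ ∀ ω, σ ω ≤ T})
    (V1 S V2 : ℕ → Ω → ℝ)
    (hV1le : ∀ t ≤ T, ∀ ρ : Ω → ℕ, IsStoppingTime ℱ (fun ω => (ρ ω : WithTop ℕ)) → (∀ ω, t ≤ ρ ω ∧ ρ ω ≤ T) →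
      V1 t ≤ᵐ[μ] μ[fun ω => U (ρ ω) t ω | ℱ t])
    (hV1greatest : ∀ t ≤ T, ∀ Z : Ω → ℝ,
      (∀ ρ : Ω → ℕ, IsStoppingTime ℱ (fun ω => (ρ ω : WithTop ℕ)) → (∀ ω, t ≤ ρ ω ∧ ρ ω ≤ T) →
        Z ≤ᵐ[μ] μ[fun ω => U (ρ ω) t ω | ℱ t]) → Z ≤ᵐ[μ] V1 t)
    (hSge : ∀ t < T, ∀ τ : Ω → ℕ, IsStoppingTime ℱ (fun ω => (τ ω : WithTop ℕ)) → (∀ ω, t + 1 ≤ τ ω ∧ τ ω ≤ T) →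
      μ[fun ω => U t (τ ω) ω | ℱ t] ≤ᵐ[μ] S t)
    (hSleast : ∀ t < T, ∀ Z : Ω → ℝ,
      (∀ τ : Ω → ℕ, IsStoppingTime ℱ (fun ω => (τ ω : WithTop ℕ)) → (∀ ω, t + 1 ≤ τ ω ∧ τ ω ≤ T) →
        μ[fun ω => U t (τ ω) ω | ℱ t] ≤ᵐ[μ] Z) → S t ≤ᵐ[μ] Z)
    (hV2 : ∀ t < T, ∀ ω, V2 t ω = max (S t ω) (V1 t ω))
    (hV2T : V2 T = U T T)
    (TypeII : ((Ω → ℕ) → Ω → ℕ) → Prop)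
    (hTypeII : ∀ ρ, TypeII ρ ↔ ((∀ σ ∈ 𝒯, ρ σ ∈ 𝒯) ∧ ∀ σ₁ ∈ 𝒯, ∀ σ₂ ∈ 𝒯, ∀ ω,
      (ρ σ₁ ω = ρ σ₂ ω ∧ ρ σ₁ ω < min (σ₁ ω) (σ₂ ω)) ∨
        min (σ₁ ω) (σ₂ ω) ≤ min (ρ σ₁ ω) (ρ σ₂ ω)))
    -- the Dynkin game value V and its optimal τ_d
    (V : ℝ)
    (hV : V = ⨅ ρ : 𝒯, ⨆ τ : 𝒯,
      ∫ ω, (if τ.1 ω ≤ ρ.1 ω then V1 (τ.1 ω) ω else V2 (ρ.1 ω) ω) ∂μ)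
    (τd : Ω → ℕ) (hτd : τd ∈ 𝒯)
    (hτdopt : V = ⨅ ρ : 𝒯,
      ∫ ω, (if τd ω ≤ ρ.1 ω then V1 (τd ω) ω else V2 (ρ.1 ω) ω) ∂μ)
    -- strictly before τ_d one has V¹ < V², so the esssup part attains V²
    (hbefore : ∀ᵐ ω ∂μ, ∀ s, s < τd ω → V1 s ω < V2 s ω)
    -- optimizers τ_u(t) of the esssup, with τ_u(t) ≥ t+1 for t < T and τ_u(T) = T
    (τu : ℕ → Ω → ℕ)
    (hτu : ∀ t ≤ T, IsStoppingTime ℱ (fun ω => (τu t ω : WithTop ℕ)) ∧ ∀ ω, τu t ω ≤ T)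
    (hτuge : ∀ t, t < T → ∀ ω, t + 1 ≤ τu t ω)
    (hτuT : ∀ ω, τu T ω = T)
    (hτuopt : ∀ t < T, S t =ᵐ[μ] μ[fun ω => U t (τu t ω) ω | ℱ t]) :
    (∀ ρ : (Ω → ℕ) → Ω → ℕ, TypeII ρ →
      ∀ τs : Ω → ℕ, (∀ ω, τs ω = if τd ω ≤ ρ τd ω then τd ω else τu (ρ τd ω) ω) →
        V ≤ ∫ ω, U (ρ τs ω) (τs ω) ω ∂μ ∧
        (∫ ω, U (ρ τs ω) (τs ω) ω ∂μ) ≤ ⨆ τ : 𝒯, ∫ ω, U (ρ τ.1 ω) (τ.1 ω) ω ∂μ) ∧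
    V ≤ ⨅ ρ : {ρ : (Ω → ℕ) → Ω → ℕ // TypeII ρ}, ⨆ τ : 𝒯,
      ∫ ω, U (ρ.1 τ.1 ω) (τ.1 ω) ω ∂μ :=
  stmt_16_general ℱ T U hUmeas hUbdd 𝒯 h𝒯 V1 S V2 hV1le hV1greatest hV2 hV2T TypeII hTypeII V τd hτd
    hτdopt hbefore τu hτu hτuge hτuT hτuopt
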